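/- Minimal-turn DWBC configurations and the Mallows weight: fix n≥1. (i) Every DWBC six-vertex configuration σ on the n×n square satisfies N₅(σ)+N₆(σ) ≥ n. (ii) The configurations with N₅(σ)+N₆(σ)=n are exactly those with N₆(σ)=0 and N₅(σ)=n, and they are in bijection with permutations τ of {1,…,n}: the Type-5 vertices of the configuration corresponding to τ occupy exactly the positions (τ(y),y) for y=1,…,n. (iii) For the configuration σ_τ corresponding to τ one has N₃(σ_τ)+N₄(σ_τ) = 2·inv(τ) and N₁(σ_τ)+N₂(σ_τ) = n(n−1) − 2·inv(τ), where inv(τ)=#{(i,j) : i<j and τ(i)>τ(j)}. Consequently, for any a,b>0, the probability measure on configurations with N₅+N₆=n proportional to a^{N₁+N₂} b^{N₃+N₄} assigns σ_τ probability q^{inv(τ)}/∑_{τ'∈S_n} q^{inv(τ')} with q=b²/a², i.e. it is the Mallows measure on S_n. -/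

import Mathlib

open scoped BigOperators
open Filter MeasureTheory Topology

namespace SixV


/-- Edge occupations for the six-vertex model on the `n × n` square:
`σ.1 x j` is the occupation of the horizontal edge between `(x, j+1)` and `(x+1, j+1)`
(i.e. `H(x, j+1)` for `x ∈ {0,…,n}`), and `σ.2 i y` is the occupation of the vertical
edge `V(i+1, y)` for `y ∈ {0,…,n}`. -/
abbrev Config (n : ℕ) := (Fin (n + 1) → Fin n → Bool) × (Fin n → Fin (n + 1) → Bool)

def b2n (b : Bool) : ℕ := if b then 1 else 0

/-- Domain Wall Boundary Conditions together with the ice rule (conservation law). -/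
def IsDWBC {n : ℕ} (σ : Config n) : Prop :=
  (∀ i j : Fin n,
      b2n (σ.1 i.castSucc j) + b2n (σ.2 i j.castSucc)
        = b2n (σ.1 i.succ j) + b2n (σ.2 i j.succ)) ∧
  (∀ j : Fin n, σ.1 0 j = true) ∧
  (∀ j : Fin n, σ.1 (Fin.last n) j = false) ∧
  (∀ i : Fin n, σ.2 i 0 = false) ∧
  (∀ i : Fin n, σ.2 i (Fin.last n) = true)

abbrev DWBC (n : ℕ) := {σ : Config n // IsDWBC σ}

noncomputable instance instFintypeDWBC (n : ℕ) : Fintype (DWBC n) := Fintype.ofFinite _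

/-- Vertex type from quadruple (H(x−1,y), V(x,y−1), H(x,y), V(x,y)). -/
def vtype : Bool → Bool → Bool → Bool → ℕ
  | false, false, false, false => 1
  | true,  true,  true,  true  => 2
  | true,  false, true,  false => 3
  | false, true,  false, true  => 4
  | true,  false, false, true  => 5
  | false, true,  true,  false => 6
  | _, _, _, _ => 0

/-- Type of the vertex at `(i+1, j+1)`. -/
def vertexType {n : ℕ} (σ : Config n) (i j : Fin n) : ℕ :=
  vtype (σ.1 i.castSucc j) (σ.2 i j.castSucc) (σ.1 i.succ j) (σ.2 i j.succ)

/-- `Ncount σ t` is the number of vertices of Type `t`. -/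
noncomputable def Ncount {n : ℕ} (σ : Config n) (ty : ℕ) : ℕ :=
  (Finset.univ.filter fun p : Fin n × Fin n => vertexType σ p.1 p.2 = ty).card

/-- The weight `a^(N₁+N₂) b^(N₃+N₄) c^(N₅+N₆)`. -/
noncomputable def wtABC {n : ℕ} (a b c : ℝ) (σ : Config n) : ℝ :=
  a ^ (Ncount σ 1 + Ncount σ 2) * b ^ (Ncount σ 3 + Ncount σ 4)
    * c ^ (Ncount σ 5 + Ncount σ 6)

/-- Gibbs probability of a DWBC configuration. -/
noncomputable def gibbs (n : ℕ) (a b c : ℝ) (σ : DWBC n) : ℝ :=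
  wtABC a b c σ.1 / ∑ σ' : DWBC n, wtABC a b c σ'.1

/-- Columns `x ∈ {1,…,n}` with `V(x, j) = 1`. -/
noncomputable def rowFinset {n : ℕ} (σ : DWBC n) (j : ℕ) : Finset ℕ :=
  if h : j ≤ n then
    (Finset.univ.filter fun x : Fin n => σ.1.2 x ⟨j, Nat.lt_succ_of_le h⟩ = true).image
      fun x : Fin n => (x : ℕ) + 1
  else ∅

/-- The monotone triangle: `lam σ i j` is the `i`-th smallest column with `V(·, j) = 1`. -/
noncomputable def lam {n : ℕ} (σ : DWBC n) (i j : ℕ) : ℕ :=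
  ((rowFinset σ j).sort (· ≤ ·)).getD (i - 1) 0


/-- Weight of the `c → 0` degeneration: supported on configurations with the minimal
number `n` of type `c` vertices, with weight `a^{N₁+N₂} b^{N₃+N₄}`. -/
noncomputable def wt0 {n : ℕ} (a b : ℝ) (σ : Config n) : ℝ :=
  if Ncount σ 5 + Ncount σ 6 = n then
    a ^ (Ncount σ 1 + Ncount σ 2) * b ^ (Ncount σ 3 + Ncount σ 4)
  else 0

/-- Probability of a DWBC configuration under the measure supported on configurations
with `N₅ + N₆ = n`, proportional to `a^{N₁+N₂} b^{N₃+N₄}`. -/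
noncomputable def gibbs0 (n : ℕ) (a b : ℝ) (σ : DWBC n) : ℝ :=
  wt0 a b σ.1 / ∑ σ' : DWBC n, wt0 a b σ'.1

/-- The number of inversions of a permutation of `{0,…,n−1}`. -/
def inversions {n : ℕ} (τ : Equiv.Perm (Fin n)) : ℕ :=
  (Finset.univ.filter fun p : Fin n × Fin n => p.1 < p.2 ∧ τ p.2 < τ p.1).card

open Finset

/-!
By the ice rule, `H` drops from 1 to 0 across a type-5 vertex, rises from 0 to 1 across a type-6
vertex and is unchanged across every other vertex. Telescoping along a row from `H = 1` to `H = 0`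
shows that every row (and likewise every column) has one more type-5 than type-6 vertex, so
`N₅ = N₆ + n`. If `N₅ + N₆ = n` there is no type-6 vertex and exactly one type-5 vertex in each row
and each column, at `(τ j, j)` for a permutation `τ`; since the turns determine the
configuration, it is `H(x, j) = [x ≤ τ j]`, `V(i, y) = [τ⁻¹ i < y]`. In that configuration the
type-3 vertices and the type-4 vertices are each in bijection with the inversions of `τ`, and all
others have type 1 or 2.
-/

lemma vtype_mem_Icc_of_ice : ∀ a b c d : Bool, b2n a + b2n b = b2n c + b2n d →
    vtype a b c d ∈ Icc 1 6 := by decide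

lemma ice_turn_horizontal : ∀ a b c d : Bool, b2n a + b2n b = b2n c + b2n d →
    (if vtype a b c d = 5 then (1 : ℤ) else 0) - (if vtype a b c d = 6 then 1 else 0)
      = b2n a - b2n c := by decide

lemma ice_turn_vertical : ∀ a b c d : Bool, b2n a + b2n b = b2n c + b2n d →
    (if vtype a b c d = 5 then (1 : ℤ) else 0) - (if vtype a b c d = 6 then 1 else 0)
      = -((b2n b : ℤ) - b2n d) := by decide

lemma ice_right_eq : ∀ a b c d : Bool, b2n a + b2n b = b2n c + b2n d →
    c = if vtype a b c d = 5 then false else if vtype a b c d = 6 then true else a := by decide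

lemma ice_top_eq : ∀ a b c d : Bool, b2n a + b2n b = b2n c + b2n d →
    d = if vtype a b c d = 5 then true else if vtype a b c d = 6 then false else b := by decide

lemma vtype_eq_three_iff {a b c d : Bool} :
    vtype a b c d = 3 ↔ a = true ∧ b = false ∧ c = true ∧ d = false := by
  revert a b c d; decide

lemma vtype_eq_four_iff {a b c d : Bool} :
    vtype a b c d = 4 ↔ a = false ∧ b = true ∧ c = false ∧ d = true := by
  revert a b c d; decide

lemma vtype_eq_five_iff {a b c d : Bool} :
    vtype a b c d = 5 ↔ a = true ∧ b = false ∧ c = false ∧ d = true := by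
  revert a b c d; decide

lemma vtype_eq_six_iff {a b c d : Bool} :
    vtype a b c d = 6 ↔ a = false ∧ b = true ∧ c = true ∧ d = false := by
  revert a b c d; decide

lemma Fin.sum_castSucc_sub_succ {M : Type*} [AddCommGroup M] {n : ℕ} (g : Fin (n + 1) → M) :
    ∑ i : Fin n, (g i.castSucc - g i.succ) = g 0 - g (Fin.last n) := by
  induction n with
  | zero => simp
  | succ n ih =>
    rw [Fin.sum_univ_castSucc]
    simp only [Fin.succ_castSucc, ih fun x => g x.castSucc, Fin.succ_last, Fin.castSucc_zero]
    abel

section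

variable {n : ℕ}

noncomputable def rowCount (σ : Config n) (t : ℕ) (j : Fin n) : ℕ :=
  #{i | vertexType σ i j = t}

noncomputable def colCount (σ : Config n) (t : ℕ) (i : Fin n) : ℕ :=
  #{j | vertexType σ i j = t}

lemma Ncount_eq_sum_rowCount (σ : Config n) (t : ℕ) :
    Ncount σ t = ∑ j, rowCount σ t j := by
  simp only [Ncount, rowCount, card_filter, Fintype.sum_prod_type]
  exact sum_comm

lemma rowCount_five_eq {σ : Config n} (hσ : IsDWBC σ) (j : Fin n) :
    rowCount σ 5 j = rowCount σ 6 j + 1 := by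
  obtain ⟨hice, hleft, hright, -, -⟩ := hσ
  have : (rowCount σ 5 j : ℤ) - rowCount σ 6 j = 1 := by
    simp only [rowCount, card_filter, Nat.cast_sum, Nat.cast_ite, Nat.cast_one, Nat.cast_zero,
      ← sum_sub_distrib]
    refine (sum_congr rfl fun i _ => ice_turn_horizontal _ _ _ _ (hice i j)).trans ?_
    rw [Fin.sum_castSucc_sub_succ fun x => (b2n (σ.1 x j) : ℤ), hleft, hright]
    rfl
  omega

lemma colCount_five_eq {σ : Config n} (hσ : IsDWBC σ) (i : Fin n) :
    colCount σ 5 i = colCount σ 6 i + 1 := by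
  obtain ⟨hice, -, -, hbottom, htop⟩ := hσ
  have : (colCount σ 5 i : ℤ) - colCount σ 6 i = 1 := by
    simp only [colCount, card_filter, Nat.cast_sum, Nat.cast_ite, Nat.cast_one, Nat.cast_zero,
      ← sum_sub_distrib]
    refine (sum_congr rfl fun j _ => ice_turn_vertical _ _ _ _ (hice i j)).trans ?_
    rw [sum_neg_distrib, Fin.sum_castSucc_sub_succ fun y => (b2n (σ.2 i y) : ℤ), hbottom, htop]
    rfl
  omega

lemma Ncount_five_eq {σ : Config n} (hσ : IsDWBC σ) : Ncount σ 5 = Ncount σ 6 + n := by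
  simp [Ncount_eq_sum_rowCount, rowCount_five_eq hσ, sum_add_distrib]

lemma sum_Ncount_eq {σ : Config n} (hσ : IsDWBC σ) :
    Ncount σ 1 + Ncount σ 2 + Ncount σ 3 + Ncount σ 4 + Ncount σ 5 + Ncount σ 6 = n * n := by
  have := card_eq_sum_card_fiberwise (s := univ) (t := Icc 1 6)
    (f := fun p : Fin n × Fin n => vertexType σ p.1 p.2)
    fun p _ => vtype_mem_Icc_of_ice _ _ _ _ (hσ.1 p.1 p.2)
  simpa [Ncount, sum_Icc_succ_top, add_assoc] using this.symm

lemma eq_of_turns {σ σ' : Config n} (hσ : IsDWBC σ) (hσ' : IsDWBC σ')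
    (h5 : ∀ i j, vertexType σ i j = 5 ↔ vertexType σ' i j = 5)
    (h6 : ∀ i j, vertexType σ i j = 6 ↔ vertexType σ' i j = 6) : σ = σ' := by
  simp only [vertexType] at h5 h6
  refine Prod.ext (funext fun x => funext fun j => ?_) (funext fun i => funext fun y => ?_)
  · induction x using Fin.induction with
    | zero => rw [hσ.2.1, hσ'.2.1]
    | succ i ih =>
      rw [ice_right_eq _ _ _ _ (hσ.1 i j), ice_right_eq _ _ _ _ (hσ'.1 i j)]
      simp only [h5 i j, h6 i j]
      rw [ih]
  · induction y using Fin.induction with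
    | zero => rw [hσ.2.2.2.1, hσ'.2.2.2.1]
    | succ j ih =>
      rw [ice_top_eq _ _ _ _ (hσ.1 i j), ice_top_eq _ _ _ _ (hσ'.1 i j)]
      simp only [h5 i j, h6 i j]
      rw [ih]

def permConfig (τ : Equiv.Perm (Fin n)) : Config n :=
  (fun x j => decide (x ≤ (τ j).castSucc), fun i y => decide ((τ.symm i).castSucc < y))

lemma vertexType_permConfig (τ : Equiv.Perm (Fin n)) (i j : Fin n) :
    vertexType (permConfig τ) i j =
      vtype (decide (i ≤ τ j)) (decide (τ.symm i < j)) (decide (i < τ j))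
        (decide (τ.symm i ≤ j)) := by
  simp [vertexType, permConfig]

lemma isDWBC_permConfig (τ : Equiv.Perm (Fin n)) : IsDWBC (permConfig τ) := by
  refine ⟨fun i j => ?_, fun j => ?_, fun j => ?_, fun i => ?_, fun i => ?_⟩
  · simp only [permConfig, Fin.castSucc_le_castSucc_iff, Fin.succ_le_castSucc_iff,
      Fin.castSucc_lt_castSucc_iff, Fin.castSucc_lt_succ_iff]
    by_cases h : i = τ j
    · simp [h, b2n]
    · have h' : τ.symm i ≠ j := by rwa [Ne, Equiv.symm_apply_eq]
      simp [b2n, le_iff_lt_or_eq, h, h']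
  all_goals simp [permConfig, Fin.castSucc_lt_last]

lemma vertexType_permConfig_eq_three_iff {τ : Equiv.Perm (Fin n)} {i j : Fin n} :
    vertexType (permConfig τ) i j = 3 ↔ i < τ j ∧ j < τ.symm i := by
  simp only [vertexType_permConfig, vtype_eq_three_iff, decide_eq_true_iff,
    decide_eq_false_iff_not, not_lt, not_le]
  constructor
  · exact fun h => ⟨h.2.2.1, h.2.2.2⟩
  · exact fun h => ⟨h.1.le, h.2.le, h⟩

lemma vertexType_permConfig_eq_four_iff {τ : Equiv.Perm (Fin n)} {i j : Fin n} :
    vertexType (permConfig τ) i j = 4 ↔ τ j < i ∧ τ.symm i < j := by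
  simp only [vertexType_permConfig, vtype_eq_four_iff, decide_eq_true_iff,
    decide_eq_false_iff_not, not_lt, not_le]
  constructor
  · exact fun h => ⟨h.1, h.2.1⟩
  · exact fun h => ⟨h.1, h.2, h.1.le, h.2.le⟩

lemma vertexType_permConfig_eq_five_iff {τ : Equiv.Perm (Fin n)} {i j : Fin n} :
    vertexType (permConfig τ) i j = 5 ↔ τ j = i := by
  simp only [vertexType_permConfig, vtype_eq_five_iff, decide_eq_true_iff,
    decide_eq_false_iff_not, not_lt]
  constructor
  · exact fun h => le_antisymm h.2.2.1 h.1
  · rintro rfl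
    simp

lemma vertexType_permConfig_ne_six (τ : Equiv.Perm (Fin n)) (i j : Fin n) :
    vertexType (permConfig τ) i j ≠ 6 := by
  simp only [vertexType_permConfig, Ne, vtype_eq_six_iff, decide_eq_true_iff,
    decide_eq_false_iff_not, not_le]
  exact fun h => h.1.not_gt h.2.2.1

lemma Ncount_permConfig_three (τ : Equiv.Perm (Fin n)) :
    Ncount (permConfig τ) 3 = inversions τ :=
  card_equiv ((Equiv.prodComm _ _).trans ((Equiv.refl _).prodCongr τ.symm)) fun p => by
    simp [vertexType_permConfig_eq_three_iff, and_comm]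

lemma Ncount_permConfig_four (τ : Equiv.Perm (Fin n)) :
    Ncount (permConfig τ) 4 = inversions τ :=
  card_equiv (τ.symm.prodCongr (Equiv.refl _)) fun p => by
    simp [vertexType_permConfig_eq_four_iff, and_comm]

lemma Ncount_permConfig_six (τ : Equiv.Perm (Fin n)) : Ncount (permConfig τ) 6 = 0 := by
  simp [Ncount, vertexType_permConfig_ne_six]

lemma permConfig_injective : Function.Injective (permConfig (n := n)) := by
  intro τ τ' h
  refine Equiv.ext fun j => ?_
  have : vertexType (permConfig τ') (τ j) j = 5 := by
    rw [← h, vertexType_permConfig_eq_five_iff]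
  exact (vertexType_permConfig_eq_five_iff.mp this).symm

lemma exists_eq_permConfig {σ : Config n} (hσ : IsDWBC σ)
    (hmin : Ncount σ 5 + Ncount σ 6 = n) :
    ∃ τ, σ = permConfig τ := by
  have no_six : ∀ i j, vertexType σ i j ≠ 6 := by
    have : Ncount σ 6 = 0 := by have := Ncount_five_eq hσ; omega
    simpa [Ncount, filter_eq_empty_iff] using this
  have row_five (j : Fin n) : rowCount σ 5 j = 1 := by
    rw [rowCount_five_eq hσ, add_eq_right, rowCount, card_eq_zero, filter_eq_empty_iff]
    exact fun i _ => no_six i j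
  have col_five (i : Fin n) : colCount σ 5 i = 1 := by
    rw [colCount_five_eq hσ, add_eq_right, colCount, card_eq_zero, filter_eq_empty_iff]
    exact fun j _ => no_six i j
  choose p hp using fun j => card_eq_one.mp (row_five j)
  have five_iff (i j : Fin n) : vertexType σ i j = 5 ↔ p j = i := by
    simpa [eq_comm] using Finset.ext_iff.mp (hp j) i
  have p_injective : Function.Injective p := fun j j' h =>
    card_le_one.mp (col_five (p j)).le j (by simp [five_iff]) j' (by simp [five_iff, h])
  let τ := Equiv.ofBijective p p_injective.bijective_of_finite
  refine ⟨τ, eq_of_turns hσ (isDWBC_permConfig τ) (fun i j => ?_) (fun i j => ?_)⟩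
  · rw [vertexType_permConfig_eq_five_iff, five_iff]
    rfl
  · simp [no_six, vertexType_permConfig_ne_six]

lemma Ncount_permConfig_five_add_six (τ : Equiv.Perm (Fin n)) :
    Ncount (permConfig τ) 5 + Ncount (permConfig τ) 6 = n := by
  rw [Ncount_five_eq (isDWBC_permConfig τ), Ncount_permConfig_six, zero_add, add_zero]

variable (n) in
noncomputable def permEquivMinimal :
    Equiv.Perm (Fin n) ≃ {σ : DWBC n // Ncount σ.1 5 + Ncount σ.1 6 = n} :=
  Equiv.ofBijective
    (fun τ => ⟨⟨permConfig τ, isDWBC_permConfig τ⟩, Ncount_permConfig_five_add_six τ⟩)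
    ⟨fun τ τ' h => permConfig_injective (congrArg (fun σ => σ.1.1) h), fun σ => by
      obtain ⟨τ, hτ⟩ := exists_eq_permConfig σ.1.2 σ.2
      exact ⟨τ, Subtype.ext (Subtype.ext hτ.symm)⟩⟩

lemma permConfig_permEquivMinimal_symm (σ : {σ : DWBC n // Ncount σ.1 5 + Ncount σ.1 6 = n}) :
    permConfig ((permEquivMinimal n).symm σ) = σ.1.1 :=
  congrArg (fun σ => σ.1.1) ((permEquivMinimal n).apply_symm_apply σ)

lemma Ncount_permConfig_one_add_two (τ : Equiv.Perm (Fin n)) :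
    Ncount (permConfig τ) 1 + Ncount (permConfig τ) 2 + 2 * inversions τ = n * (n - 1) := by
  have total := sum_Ncount_eq (isDWBC_permConfig τ)
  rw [Ncount_five_eq (isDWBC_permConfig τ), Ncount_permConfig_three, Ncount_permConfig_four,
    Ncount_permConfig_six] at total
  rw [Nat.mul_sub_one]
  omega

lemma wt0_permConfig {a : ℝ} (ha : a ≠ 0) (b : ℝ) (τ : Equiv.Perm (Fin n)) :
    wt0 a b (permConfig τ) = a ^ (n * (n - 1)) * (b ^ 2 / a ^ 2) ^ inversions τ := by
  rw [wt0, if_pos (Ncount_permConfig_five_add_six τ), Ncount_permConfig_three,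
    Ncount_permConfig_four, ← Ncount_permConfig_one_add_two, div_pow, ← pow_mul, ← pow_mul]
  field_simp
  ring

lemma sum_wt0 (a b : ℝ) :
    ∑ σ : DWBC n, wt0 a b σ.1 = ∑ τ : Equiv.Perm (Fin n), wt0 a b (permConfig τ) := by
  rw [← Fintype.sum_subtype_add_sum_subtype fun σ : DWBC n => Ncount σ.1 5 + Ncount σ.1 6 = n,
    ← (permEquivMinimal n).sum_comp]
  have off_minimal (σ : {σ : DWBC n // ¬Ncount σ.1 5 + Ncount σ.1 6 = n}) :
      wt0 a b σ.1.1 = 0 :=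
    if_neg σ.2
  simp only [off_minimal, sum_const_zero, add_zero]
  rfl

end

theorem minimal_turn_configurations_mallows_general (n : ℕ) :
    (∀ σ : DWBC n, n ≤ Ncount σ.1 5 + Ncount σ.1 6) ∧
    (∀ σ : DWBC n, Ncount σ.1 5 + Ncount σ.1 6 = n ↔
      (Ncount σ.1 6 = 0 ∧ Ncount σ.1 5 = n)) ∧
    ∃ e : {σ : DWBC n // Ncount σ.1 5 + Ncount σ.1 6 = n} ≃ Equiv.Perm (Fin n),
      (∀ σ, ∀ i j : Fin n, vertexType σ.1.1 i j = 5 ↔ e σ j = i) ∧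
      (∀ σ, Ncount σ.1.1 3 + Ncount σ.1.1 4 = 2 * inversions (e σ) ∧
        Ncount σ.1.1 1 + Ncount σ.1.1 2 = n * (n - 1) - 2 * inversions (e σ)) ∧
      (∀ a b : ℝ, 0 < a → 0 < b → ∀ σ,
        gibbs0 n a b σ.1 =
          (b ^ 2 / a ^ 2) ^ inversions (e σ)
            / ∑ τ' : Equiv.Perm (Fin n), (b ^ 2 / a ^ 2) ^ inversions τ') := by
  refine ⟨fun σ => by have := Ncount_five_eq σ.2; omega,
    fun σ => by have := Ncount_five_eq σ.2; omega, (permEquivMinimal n).symm,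
    fun σ i j => ?_, fun σ => ?_, fun a b ha _ σ => ?_⟩
  · rw [← permConfig_permEquivMinimal_symm σ, vertexType_permConfig_eq_five_iff]
  · have := Ncount_permConfig_one_add_two ((permEquivMinimal n).symm σ)
    rw [← permConfig_permEquivMinimal_symm σ, Ncount_permConfig_three, Ncount_permConfig_four]
    omega
  · rw [gibbs0, sum_wt0, ← permConfig_permEquivMinimal_symm σ]
    simp only [wt0_permConfig ha.ne', ← mul_sum]
    exact mul_div_mul_left _ _ (pow_ne_zero _ ha.ne')

/-- **Minimal-turn DWBC configurations and the Mallows weight.**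
(i) every DWBC configuration on the `n × n` square has at least `n` type-`c` vertices;
(ii) `N₅ + N₆ = n` forces `N₆ = 0`, `N₅ = n`; (iii) such configurations are in bijection
with permutations `τ` of `{1,…,n}`, the type-5 vertices occupying the positions
`(τ(y), y)`; for the configuration `σ_τ` one has `N₃+N₄ = 2·inv(τ)` and
`N₁+N₂ = n(n−1) − 2·inv(τ)`; consequently, for `a, b > 0` the measure on minimal-turn
configurations proportional to `a^{N₁+N₂} b^{N₃+N₄}` is the Mallows measure with
`q = b²/a²`. -/
theorem minimal_turn_configurations_mallows (n : ℕ) (hn : 1 ≤ n) :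
    (∀ σ : DWBC n, n ≤ Ncount σ.1 5 + Ncount σ.1 6) ∧
    (∀ σ : DWBC n, Ncount σ.1 5 + Ncount σ.1 6 = n ↔
      (Ncount σ.1 6 = 0 ∧ Ncount σ.1 5 = n)) ∧
    ∃ e : {σ : DWBC n // Ncount σ.1 5 + Ncount σ.1 6 = n} ≃ Equiv.Perm (Fin n),
      (∀ σ, ∀ i j : Fin n, vertexType σ.1.1 i j = 5 ↔ e σ j = i) ∧
      (∀ σ, Ncount σ.1.1 3 + Ncount σ.1.1 4 = 2 * inversions (e σ) ∧
        Ncount σ.1.1 1 + Ncount σ.1.1 2 = n * (n - 1) - 2 * inversions (e σ)) ∧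
      (∀ a b : ℝ, 0 < a → 0 < b → ∀ σ,
        gibbs0 n a b σ.1 =
          (b ^ 2 / a ^ 2) ^ inversions (e σ)
            / ∑ τ' : Equiv.Perm (Fin n), (b ^ 2 / a ^ 2) ^ inversions τ') :=
  minimal_turn_configurations_mallows_general n

end SixV
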